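/- Let w(y) = √2 · sech(y) and let λ ∈ ℝ with λ ≠ 3. Suppose ψ : ℝ → ℝ is twice continuously differentiable, ψ and ψ' are bounded and tend to 0 as |y| → ∞, and ψ satisfies (L₀ − λ)ψ = w³. Then for the exponent set (p,q,m,s) = (3,1,3,0), the multiplier F(λ) ≡ m·q·(∫_ℝ w(y)^{m−1}·ψ(y) dy)/(∫_ℝ w(y)^m dy) = 3·(∫_ℝ w²ψ dy)/(∫_ℝ w³ dy) equals 9/(2(3 − λ)). -/

import Mathlib

/-!
The function `w²` is an eigenfunction of `L₀`: `(w²)'' = 4w² - 3w⁴`, i.e. `L₀(w²) = 3w²`.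
Green's identity for `w²` and `ψ` therefore turns `(L₀ - λ)ψ = w³` into
`(3 - λ) ∫ w²ψ = ∫ w⁵`; its boundary terms vanish because `w²` and `(w²)'` decay while `ψ` and
`ψ'` stay bounded. Finally `∫ w⁵ / ∫ w³ = 2 ∫ sech⁵ / ∫ sech³ = 3/2` by the reduction formula
`(n + 1) ∫ sech^(n+2) = n ∫ sech^n`, which integrates `(sinh / cosh^(n+1))'`.
-/

open MeasureTheory Real Filter

/-- The homoclinic solution of the core problem for `p = 3`: `w(y) = √2 sech(y)`. -/
noncomputable def w3 (y : ℝ) : ℝ := Real.sqrt 2 / Real.cosh y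

namespace Real

lemma one_add_sq_le_four_mul_cosh (y : ℝ) : 1 + y ^ 2 ≤ 4 * cosh y := by
  rw [← cosh_abs, cosh_eq]
  nlinarith [quadratic_le_exp_of_nonneg (abs_nonneg y), add_one_le_exp (-|y|), sq_abs y]

lemma abs_sinh_le_cosh (y : ℝ) : |sinh y| ≤ cosh y := by
  rw [abs_sinh, ← cosh_abs]
  exact (sinh_lt_cosh _).le

lemma tendsto_cosh_cocompact : Tendsto cosh (cocompact ℝ) atTop := by
  refine tendsto_atTop_mono (fun y => ?_) (tendsto_norm_cocompact_atTop.atTop_div_const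
    (by norm_num : (0 : ℝ) < 4))
  rw [norm_eq_abs, div_le_iff₀ (by norm_num)]
  nlinarith [one_add_sq_le_four_mul_cosh y, sq_nonneg (|y| - 1), sq_abs y]

lemma integrable_inv_cosh : Integrable fun y : ℝ => (cosh y)⁻¹ := by
  refine (integrable_inv_one_add_sq.const_mul 4).mono' (by fun_prop) (.of_forall fun y => ?_)
  have hc := cosh_pos y
  rw [norm_inv, norm_of_nonneg hc.le, ← div_eq_mul_inv, le_div_iff₀ (by positivity),
    inv_mul_le_iff₀ hc]
  linarith [one_add_sq_le_four_mul_cosh y]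

lemma integrable_inv_cosh_pow {n : ℕ} (hn : n ≠ 0) :
    Integrable fun y : ℝ => (cosh y ^ n)⁻¹ :=
  integrable_inv_cosh.mono' (by fun_prop) (.of_forall fun y => by
    rw [norm_of_nonneg (by positivity)]
    exact inv_anti₀ (cosh_pos y) (le_self_pow₀ (one_le_cosh y) hn))

lemma tendsto_inv_cosh_pow_cocompact {n : ℕ} (hn : n ≠ 0) :
    Tendsto (fun y : ℝ => (cosh y ^ n)⁻¹) (cocompact ℝ) (nhds 0) :=
  ((tendsto_pow_atTop hn).comp tendsto_cosh_cocompact).inv_tendsto_atTop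

lemma abs_sinh_div_cosh_pow_succ_le (y : ℝ) (n : ℕ) :
    |sinh y / cosh y ^ (n + 1)| ≤ (cosh y ^ n)⁻¹ := by
  have hc := cosh_pos y
  have hcn : 0 < cosh y ^ (n + 1) := by positivity
  rw [abs_div, abs_of_pos hcn, div_le_iff₀ hcn, pow_succ, ← mul_assoc,
    inv_mul_cancel₀ (by positivity), one_mul]
  exact abs_sinh_le_cosh y

lemma tendsto_sinh_div_cosh_pow_succ_cocompact {n : ℕ} (hn : n ≠ 0) :
    Tendsto (fun y : ℝ => sinh y / cosh y ^ (n + 1)) (cocompact ℝ) (nhds 0) :=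
  squeeze_zero_norm (abs_sinh_div_cosh_pow_succ_le · n) (tendsto_inv_cosh_pow_cocompact hn)

lemma hasDerivAt_inv_cosh_pow (n : ℕ) (y : ℝ) :
    HasDerivAt (fun y => (cosh y ^ n)⁻¹) (-n * (sinh y / cosh y ^ (n + 1))) y := by
  refine (((hasDerivAt_cosh y).pow n).inv (pow_ne_zero n (cosh_pos y).ne')).congr_deriv ?_
  have hc := (cosh_pos y).ne'
  rcases n with _ | n
  · simp
  · simp only [Pi.pow_apply, Nat.cast_add, Nat.cast_one, add_tsub_cancel_right]
    field_simp
    ring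

lemma hasDerivAt_sinh_div_cosh_pow_succ (n : ℕ) (y : ℝ) :
    HasDerivAt (fun y => sinh y / cosh y ^ (n + 1))
      ((n + 1) * (cosh y ^ (n + 2))⁻¹ - n * (cosh y ^ n)⁻¹) y := by
  refine ((hasDerivAt_sinh y).div ((hasDerivAt_cosh y).pow (n + 1))
    (pow_ne_zero _ (cosh_pos y).ne')).congr_deriv ?_
  have hc := (cosh_pos y).ne'
  simp only [Pi.pow_apply, Nat.cast_add, Nat.cast_one, add_tsub_cancel_right]
  field_simp
  linear_combination (n + 1 : ℝ) * cosh y ^ (3 * n + 2) * cosh_sq y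

theorem integral_inv_cosh_pow_add_two {n : ℕ} (hn : n ≠ 0) :
    (n + 1) * ∫ y, (cosh y ^ (n + 2))⁻¹ = n * ∫ y, (cosh y ^ n)⁻¹ := by
  have hint := integrable_inv_cosh_pow (n := n + 2) (by omega)
  have := integral_of_hasDerivAt_of_tendsto (hasDerivAt_sinh_div_cosh_pow_succ n)
    ((hint.const_mul _).sub ((integrable_inv_cosh_pow hn).const_mul _))
    ((tendsto_sinh_div_cosh_pow_succ_cocompact hn).mono_left atBot_le_cocompact)
    ((tendsto_sinh_div_cosh_pow_succ_cocompact hn).mono_left atTop_le_cocompact)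
  rw [integral_sub (hint.const_mul _) ((integrable_inv_cosh_pow hn).const_mul _),
    integral_const_mul, integral_const_mul, sub_self] at this
  linarith

end Real

theorem integral_mul_deriv_sub_deriv_mul_eq_zero {u u' u'' v v' v'' : ℝ → ℝ}
    (hu : ∀ x, HasDerivAt u (u' x) x) (hu' : ∀ x, HasDerivAt u' (u'' x) x)
    (hv : ∀ x, HasDerivAt v (v' x) x) (hv' : ∀ x, HasDerivAt v' (v'' x) x)
    (hint : Integrable fun x => u x * v'' x - u'' x * v x)
    (hlim : Tendsto (fun x => u x * v' x - u' x * v x) (cocompact ℝ) (nhds 0)) :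
    ∫ x, (u x * v'' x - u'' x * v x) = 0 := by
  have hderiv (x : ℝ) : HasDerivAt (fun x => u x * v' x - u' x * v x)
      (u x * v'' x - u'' x * v x) x :=
    (((hu x).mul (hv' x)).sub ((hu' x).mul (hv x))).congr_deriv (by ring)
  simpa using integral_of_hasDerivAt_of_tendsto hderiv hint
    (hlim.mono_left atBot_le_cocompact) (hlim.mono_left atTop_le_cocompact)

lemma w3_pos (y : ℝ) : 0 < w3 y := div_pos (by positivity) (cosh_pos y)

lemma w3_pow (n : ℕ) (y : ℝ) : w3 y ^ n = √2 ^ n * (cosh y ^ n)⁻¹ := by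
  rw [w3, div_pow, div_eq_mul_inv]

lemma integrable_w3_pow {n : ℕ} (hn : n ≠ 0) : Integrable fun y => w3 y ^ n := by
  simpa only [w3_pow] using (integrable_inv_cosh_pow hn).const_mul _

lemma integral_w3_pow (n : ℕ) : ∫ y, w3 y ^ n = √2 ^ n * ∫ y, (cosh y ^ n)⁻¹ := by
  simp only [w3_pow, integral_const_mul]

lemma integral_w3_pow_pos {n : ℕ} (hn : n ≠ 0) : 0 < ∫ y, w3 y ^ n :=
  integral_pos_of_integrable_nonneg_nonzero (x := 0)
    ((continuous_const.div continuous_cosh fun y => (cosh_pos y).ne').pow n)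
    (integrable_w3_pow hn) (fun y => (pow_pos (w3_pos y) n).le) (pow_pos (w3_pos 0) n).ne'

lemma integral_w3_pow_five : ∫ y, w3 y ^ 5 = 3 / 2 * ∫ y, w3 y ^ 3 := by
  have hred := integral_inv_cosh_pow_add_two (n := 3) (by norm_num)
  have h2 : √2 ^ 2 = 2 := sq_sqrt zero_le_two
  rw [integral_w3_pow, integral_w3_pow]
  push_cast at hred
  linear_combination (√2 ^ 3 / 2) * hred + √2 ^ 3 * (∫ y, (cosh y ^ 5)⁻¹) * h2

lemma hasDerivAt_w3_sq (y : ℝ) :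
    HasDerivAt (fun y => w3 y ^ 2) (-4 * (sinh y / cosh y ^ 3)) y := by
  have h2 : √2 ^ 2 = 2 := sq_sqrt zero_le_two
  simp only [w3_pow, h2]
  exact ((hasDerivAt_inv_cosh_pow 2 y).const_mul 2).congr_deriv (by push_cast; ring)

lemma hasDerivAt_deriv_w3_sq (y : ℝ) :
    HasDerivAt (fun y => -4 * (sinh y / cosh y ^ 3)) (4 * w3 y ^ 2 - 3 * w3 y ^ 4) y := by
  have h2 : √2 ^ 2 = 2 := sq_sqrt zero_le_two
  have h4 : √2 ^ 4 = 4 := by rw [show 4 = 2 * 2 from rfl, pow_mul, h2]; norm_num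
  refine ((hasDerivAt_sinh_div_cosh_pow_succ 2 y).const_mul (-4)).congr_deriv ?_
  rw [w3_pow, w3_pow, h2, h4]
  push_cast
  ring

lemma tendsto_w3_sq_wronskian_cocompact {v v' : ℝ → ℝ} {C : ℝ}
    (hC : ∀ y, |v y| ≤ C ∧ |v' y| ≤ C) :
    Tendsto (fun y => w3 y ^ 2 * v' y - -4 * (sinh y / cosh y ^ 3) * v y)
      (cocompact ℝ) (nhds 0) := by
  have hu : Tendsto (fun y => w3 y ^ 2) (cocompact ℝ) (nhds 0) := by
    simpa only [w3_pow, mul_zero] using (tendsto_inv_cosh_pow_cocompact two_ne_zero).const_mul _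
  have hu' : Tendsto (fun y => -4 * (sinh y / cosh y ^ 3)) (cocompact ℝ) (nhds 0) := by
    simpa using (tendsto_sinh_div_cosh_pow_succ_cocompact two_ne_zero).const_mul (-4)
  simpa using (hu.zero_mul_isBoundedUnder_le (isBoundedUnder_of ⟨C, fun y => (hC y).2⟩)).sub
    (hu'.zero_mul_isBoundedUnder_le (isBoundedUnder_of ⟨C, fun y => (hC y).1⟩))

lemma sub_mul_integral_w3_sq_mul_eq (lam : ℝ) {ψ : ℝ → ℝ} (hψ : ContDiff ℝ 2 ψ) {C : ℝ}
    (hC : ∀ y, |ψ y| ≤ C ∧ |deriv ψ y| ≤ C)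
    (heq : ∀ y, deriv (deriv ψ) y - ψ y + 3 * w3 y ^ 2 * ψ y - lam * ψ y = w3 y ^ 3) :
    (3 - lam) * ∫ y, w3 y ^ 2 * ψ y = ∫ y, w3 y ^ 5 := by
  have hw2ψ : Integrable fun y => w3 y ^ 2 * ψ y :=
    (integrable_w3_pow two_ne_zero).mul_bdd hψ.continuous.aestronglyMeasurable
      (.of_forall fun y => (hC y).1)
  have hW : (fun y => w3 y ^ 2 * deriv (deriv ψ) y - (4 * w3 y ^ 2 - 3 * w3 y ^ 4) * ψ y)
      = fun y => (lam - 3) * (w3 y ^ 2 * ψ y) + w3 y ^ 5 :=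
    funext fun y => by linear_combination w3 y ^ 2 * heq y
  have hint := (hw2ψ.const_mul (lam - 3)).add (integrable_w3_pow (n := 5) (by norm_num))
  have hgreen := integral_mul_deriv_sub_deriv_mul_eq_zero hasDerivAt_w3_sq hasDerivAt_deriv_w3_sq
    (fun y => (hψ.differentiable two_ne_zero y).hasDerivAt)
    (fun y => (hψ.differentiable_deriv_two y).hasDerivAt) (hW ▸ hint)
    (tendsto_w3_sq_wronskian_cocompact hC)
  rw [hW, integral_add (hw2ψ.const_mul _) (integrable_w3_pow (by norm_num)),
    integral_const_mul] at hgreen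
  linarith

theorem F_lambda_explicit_general (lam : ℝ) (hlam : lam ≠ 3) (ψ : ℝ → ℝ)
    (hψ : ContDiff ℝ 2 ψ)
    (hψ_bdd : ∃ C : ℝ, ∀ y : ℝ, |ψ y| ≤ C ∧ |deriv ψ y| ≤ C)
    (heq : ∀ y : ℝ, deriv (deriv ψ) y - ψ y + 3 * (w3 y) ^ 2 * ψ y - lam * ψ y
        = (w3 y) ^ 3) :
    3 * (∫ y : ℝ, (w3 y) ^ 2 * ψ y) / (∫ y : ℝ, (w3 y) ^ 3)
      = 9 / (2 * (3 - lam)) := by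
  obtain ⟨C, hC⟩ := hψ_bdd
  have hI := sub_mul_integral_w3_sq_mul_eq lam hψ hC heq
  rw [integral_w3_pow_five] at hI
  have h3 : (3 : ℝ) - lam ≠ 0 := sub_ne_zero.mpr hlam.symm
  have hJ := (integral_w3_pow_pos (n := 3) (by norm_num)).ne'
  rw [div_eq_div_iff hJ (mul_ne_zero two_ne_zero h3)]
  linear_combination 6 * hI

/-- For the explicitly solvable exponent set `(p,q,m,s) = (3,1,3,0)`, the multiplier
`F(λ) = 3 (∫ w² ψ)/(∫ w³)` equals `9/(2(3-λ))`, where `(L₀ - λ)ψ = w³`. -/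
theorem F_lambda_explicit (lam : ℝ) (hlam : lam ≠ 3) (ψ : ℝ → ℝ)
    (hψ : ContDiff ℝ 2 ψ)
    (hψ_bdd : ∃ C : ℝ, ∀ y : ℝ, |ψ y| ≤ C ∧ |deriv ψ y| ≤ C)
    (hψ_lim : Tendsto ψ (cocompact ℝ) (nhds 0))
    (hψ'_lim : Tendsto (deriv ψ) (cocompact ℝ) (nhds 0))
    (heq : ∀ y : ℝ, deriv (deriv ψ) y - ψ y + 3 * (w3 y) ^ 2 * ψ y - lam * ψ y
        = (w3 y) ^ 3) :
    3 * (∫ y : ℝ, (w3 y) ^ 2 * ψ y) / (∫ y : ℝ, (w3 y) ^ 3)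
      = 9 / (2 * (3 - lam)) :=
  F_lambda_explicit_general lam hlam ψ hψ hψ_bdd heq
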